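/- Let α ∈ (0,1), let k ≥ 2 be an integer, and set φ₁ = π(k−1)/(2(k−α)). Then 2^{α−1} k^α cos(φ₁)^α / cos(αφ₁) < ((1−α)π)^α · sin(απ/2) / sin(απ). Geometrically, the vertex (a^{(k)}, −a^{(k)}) of the numerical stability region, where a^{(k)} = 2^{α−1} k^α cos(φ₁)^α / cos(αφ₁), lies strictly above (has smaller first coordinate than) the vertex of the continuous stability region S_*. -/

import Mathlib

/-!
Put `t = π/2 - φ₁ = (1-α)π/(2(k-α))` and `c = (1-α)π/2 = (k-α)t`. Then `cos φ₁ = sin t`,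
`cos(αφ₁) = sin(kt)` and `sin(απ) = 2 sin(απ/2) sin c`, so the claim reads
`(k sin t)^α / sin(kt) < c^α / sin c`. As `sin t < t`, the left side is below `(kt)^α / sin(kt)`,
and `u ↦ u^α / sin u` is nonincreasing on `(0, (1-α)π/(2-α)]`, an interval containing `c ≤ kt`:
its derivative has the sign of `α sin u - u cos u`, which is `≤ 0` there by the elementary bound
`(π - 2u) sin u ≤ u(π - u) cos u` on `[0, π/2]`.
-/

open Real Set

lemma hasDerivAt_mul_pi_sub_mul_cos_sub (x : ℝ) :
    HasDerivAt (fun x ↦ x * (π - x) * cos x - (π - 2 * x) * sin x)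
      (sin x * (x ^ 2 - π * x + 2)) x := by
  have hx := hasDerivAt_id' x
  refine (((hx.mul (hx.const_sub π)).mul (hasDerivAt_cos x)).sub
    (((hx.const_mul 2).const_sub π).mul (hasDerivAt_sin x))).congr_deriv ?_
  simp only [Pi.mul_apply]
  ring

lemma pi_sub_two_mul_mul_sin_le {x : ℝ} (h0 : 0 ≤ x) (h1 : x ≤ π / 2) :
    (π - 2 * x) * sin x ≤ x * (π - x) * cos x := by
  set R : ℝ → ℝ := fun x ↦ x * (π - x) * cos x - (π - 2 * x) * sin x
  set q : ℝ → ℝ := fun x ↦ x ^ 2 - π * x + 2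
  have hR' (y : ℝ) (s : Set ℝ) : HasDerivWithinAt R (sin y * q y) s y :=
    (hasDerivAt_mul_pi_sub_mul_cos_sub y).hasDerivWithinAt
  have hRc : Continuous R := by fun_prop
  have hsin {y : ℝ} (hy : y ∈ Icc 0 π) : 0 ≤ sin y := sin_nonneg_of_nonneg_of_le_pi hy.1 hy.2
  -- `q` decreases on `[0, π/2]`, so `R` first increases, then decreases; `R 0 = R (π/2) = 0`.
  suffices 0 ≤ R x by simp only [R] at this; linarith
  rcases le_total 0 (q x) with hq | hq
  · have hmono : MonotoneOn R (Icc 0 x) := by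
      refine monotoneOn_of_hasDerivWithinAt_nonneg (convex_Icc 0 x) hRc.continuousOn
        (fun y _ ↦ hR' y _) fun y hy ↦ ?_
      rw [interior_Icc] at hy
      refine mul_nonneg (hsin ⟨hy.1.le, by linarith [hy.2, pi_pos]⟩) ?_
      nlinarith [hy.1, hy.2]
    simpa [R] using hmono ⟨le_rfl, h0⟩ ⟨h0, le_rfl⟩ h0
  · have hanti : AntitoneOn R (Icc x (π / 2)) := by
      refine antitoneOn_of_hasDerivWithinAt_nonpos (convex_Icc x _) hRc.continuousOn
        (fun y _ ↦ hR' y _) fun y hy ↦ ?_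
      rw [interior_Icc] at hy
      refine mul_nonpos_of_nonneg_of_nonpos
        (hsin ⟨by linarith [hy.1], by linarith [hy.2, pi_pos]⟩) ?_
      nlinarith [hy.1, hy.2]
    have := hanti ⟨le_rfl, h1⟩ ⟨h1, le_rfl⟩ h1
    have hRpi : R (π / 2) = 0 := by simp only [R, cos_pi_div_two, sin_pi_div_two]; ring
    linarith

section

variable {α : ℝ}

lemma le_pi_div_two_of_two_sub_mul_le {u : ℝ} (hα0 : 0 ≤ α) (hα1 : α ≤ 1)
    (hu : (2 - α) * u ≤ (1 - α) * π) : u ≤ π / 2 := by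
  nlinarith [pi_pos]

lemma mul_sin_le_mul_cos {u : ℝ} (hα0 : 0 ≤ α) (hα1 : α ≤ 1) (hu0 : 0 ≤ u)
    (hu : (2 - α) * u ≤ (1 - α) * π) : α * sin u ≤ u * cos u := by
  have hupi := le_pi_div_two_of_two_sub_mul_le hα0 hα1 hu
  have hsin : 0 ≤ sin u := sin_nonneg_of_nonneg_of_le_pi hu0 (by linarith [pi_pos])
  have hpi_sub : 0 < π - u := by linarith [pi_pos]
  -- `hu` says exactly `α * (π - u) ≤ π - 2 * u`.
  have : (π - u) * (α * sin u) ≤ (π - u) * (u * cos u) := by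
    nlinarith [pi_sub_two_mul_mul_sin_le hu0 hupi, mul_le_mul_of_nonneg_right hu hsin]
  exact le_of_mul_le_mul_left this hpi_sub

lemma antitoneOn_rpow_div_sin {b : ℝ} (hα0 : 0 ≤ α) (hα1 : α ≤ 1)
    (hb : (2 - α) * b ≤ (1 - α) * π) : AntitoneOn (fun u ↦ u ^ α / sin u) (Ioc 0 b) := by
  have hsin {u : ℝ} (hu : u ∈ Ioc 0 b) : 0 < sin u := by
    refine sin_pos_of_pos_of_lt_pi hu.1 ?_
    have := le_pi_div_two_of_two_sub_mul_le hα0 hα1 (u := b) hb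
    linarith [hu.2, pi_pos]
  refine antitoneOn_of_hasDerivWithinAt_nonpos (convex_Ioc 0 b)
    (f' := fun u ↦ (α * u ^ (α - 1) * sin u - u ^ α * cos u) / sin u ^ 2)
    (((continuous_rpow_const hα0).continuousOn).div continuousOn_sin fun u hu ↦ (hsin hu).ne')
    (fun u hu ↦ ?_) (fun u hu ↦ ?_) <;> rw [interior_Ioc] at hu
  · exact ((hasDerivAt_rpow_const (Or.inl hu.1.ne')).div (hasDerivAt_sin u)
      (hsin (Ioo_subset_Ioc_self hu)).ne').hasDerivWithinAt
  · refine div_nonpos_of_nonpos_of_nonneg ?_ (sq_nonneg _)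
    have hpow : u ^ (α - 1) * u = u ^ α := by
      rw [rpow_sub_one hu.1.ne', div_mul_cancel₀ _ hu.1.ne']
    have hkey := mul_sin_le_mul_cos hα0 hα1 hu.1.le
      (le_trans (mul_le_mul_of_nonneg_left hu.2.le (by linarith)) hb)
    have := mul_le_mul_of_nonneg_left hkey (rpow_nonneg hu.1.le (α - 1))
    rw [← hpow]
    nlinarith

lemma mul_sin_rpow_div_sin_lt {K t : ℝ} (hα0 : 0 < α) (hα1 : α < 1) (hK : 1 ≤ K)
    (ht : 0 < t) (h : (2 - α) * (K * t) ≤ (1 - α) * π) :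
    K ^ α * sin t ^ α / sin (K * t) < ((K - α) * t) ^ α / sin ((K - α) * t) := by
  have hKt : 0 < K * t := by positivity
  have hKt_le := le_pi_div_two_of_two_sub_mul_le hα0.le hα1.le h
  have hsin : 0 < sin t := sin_pos_of_pos_of_lt_pi ht (by nlinarith [pi_pos])
  rw [← mul_rpow (by positivity) hsin.le]
  calc (K * sin t) ^ α / sin (K * t) < (K * t) ^ α / sin (K * t) := by
        gcongr
        · exact sin_pos_of_pos_of_lt_pi hKt (by linarith [pi_pos])
        · exact sin_lt ht
    _ ≤ ((K - α) * t) ^ α / sin ((K - α) * t) :=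
        antitoneOn_rpow_div_sin hα0.le hα1.le h ⟨by nlinarith, by nlinarith⟩
          ⟨hKt, le_rfl⟩ (by nlinarith)

end

theorem gl_vertex_below_continuous_vertex (α : ℝ) (hα : α ∈ Set.Ioo (0:ℝ) 1)
    (k : ℕ) (hk : 2 ≤ k) :
    2 ^ (α - 1) * (k:ℝ) ^ α *
        Real.cos (π * ((k:ℝ) - 1) / (2 * ((k:ℝ) - α))) ^ α /
        Real.cos (α * (π * ((k:ℝ) - 1) / (2 * ((k:ℝ) - α)))) <
      ((1 - α) * π) ^ α * Real.sin (α * π / 2) / Real.sin (α * π) := by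
  obtain ⟨hα0, hα1⟩ := hα
  have hk : (2 : ℝ) ≤ k := by exact_mod_cast hk
  have hkα : (k : ℝ) - α ≠ 0 := by linarith
  set t := (1 - α) * π / (2 * (k - α)) with ht
  have hφ : π * (k - 1) / (2 * (k - α)) = π / 2 - t := by rw [ht]; field_simp; ring
  have hαφ : α * (π / 2 - t) = π / 2 - k * t := by rw [ht]; field_simp; ring
  have hkt : (k - α) * t = (1 - α) * π / 2 := by rw [ht]; field_simp
  have htpos : 0 < t := by rw [ht]; exact div_pos (by nlinarith [pi_pos]) (by linarith)
  have hlt := mul_sin_rpow_div_sin_lt (K := k) hα0 hα1 (by linarith) htpos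
    (by nlinarith [mul_nonneg (mul_nonneg hα0.le htpos.le) (sub_nonneg.2 hk)])
  rw [hkt] at hlt
  have hsin_half : 0 < sin (α * π / 2) :=
    sin_pos_of_pos_of_lt_pi (by positivity) (by nlinarith [pi_pos])
  have hsin_c : sin ((1 - α) * π / 2) = cos (α * π / 2) := by
    rw [← sin_pi_div_two_sub]; ring_nf
  have hsin_double : sin (α * π) = 2 * sin (α * π / 2) * sin ((1 - α) * π / 2) := by
    rw [hsin_c, ← sin_two_mul]; ring_nf
  rw [hφ, hαφ, cos_pi_div_two_sub, cos_pi_div_two_sub, hsin_double]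
  calc _ = 2 ^ (α - 1) * (k ^ α * sin t ^ α / sin (k * t)) := by ring
    _ < 2 ^ (α - 1) * (((1 - α) * π / 2) ^ α / sin ((1 - α) * π / 2)) := by gcongr
    _ = _ := by
        have htwo : ((1 - α) * π) ^ α = 2 ^ α * ((1 - α) * π / 2) ^ α := by
          rw [← mul_rpow zero_le_two (by nlinarith [pi_pos])]; ring_nf
        rw [htwo, rpow_sub_one two_ne_zero]
        field_simp
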